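/- Let each f^i satisfy m_f I ⪯ ∇²f^i ⪯ M_f I, let the graph on n vertices be connected, μ, ε > 0, and D_t = ∇²F(x_t) + (1/μ)(e^l(e^l)ᵀ ⊗ I_d) + (2/μ)(L_dia ⊗ I_d) + ε I, N = (1/μ)(L_dia - L_off) ⊗ I_d. Then the spectral radius of D_t^{-1/2} N D_t^{-1/2} is at most 2(n-1)/(μ(m_f + ε) + 2(n-1)) < 1. -/

import Mathlib

/-!
Set `c = 2(n-1) / (μ(m_f+ε) + 2(n-1))`, so that `c μ (m_f+ε) = 2(1-c)(n-1)`. Then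
`c D - N = c (∇²F - m_f I + μ⁻¹ e_l e_lᵀ ⊗ I) + μ⁻¹ (2(1-c)((n-1) I - L_dia) + L) ⊗ I`
is a sum of positive semidefinite matrices: every degree is at most `n - 1` and the Laplacian `L`
is positive semidefinite. Also `N ⪰ 0`, since the signless Laplacian `L_dia - L_off` is the
Gram matrix of the unsigned incidence matrix. Conjugating by `D^{-1/2}` gives
`0 ⪯ D^{-1/2} N D^{-1/2} ⪯ c I`, so the spectrum of `D^{-1/2} N D^{-1/2}` lies in `[0, c]`.
-/

open Matrix Kronecker

section

open scoped ComplexOrder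

/-- The positive semidefinite square root of a positive semidefinite matrix
(as defined in Mathlib of December 2024, since removed). -/
noncomputable def Matrix.PosSemidef.sqrt {n 𝕜 : Type*} [Fintype n] [RCLike 𝕜] [DecidableEq n]
    {A : Matrix n n 𝕜} (hA : A.PosSemidef) : Matrix n n 𝕜 :=
  hA.1.eigenvectorUnitary.1 * diagonal ((↑) ∘ (√·) ∘ hA.1.eigenvalues) *
    (star hA.1.eigenvectorUnitary : Matrix n n 𝕜)

end

open scoped ComplexOrder

namespace Matrix

variable {m ι 𝕜 : Type*} [Fintype m] [DecidableEq m] [RCLike 𝕜]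

theorem PosSemidef.sqrt_mul_self {A : Matrix m m 𝕜} (hA : A.PosSemidef) :
    hA.sqrt * hA.sqrt = A := by
  have hd : diagonal ((RCLike.ofReal : ℝ → 𝕜) ∘ (√·) ∘ hA.1.eigenvalues) *
      diagonal ((RCLike.ofReal : ℝ → 𝕜) ∘ (√·) ∘ hA.1.eigenvalues)
      = diagonal ((RCLike.ofReal : ℝ → 𝕜) ∘ hA.1.eigenvalues) := by
    rw [diagonal_mul_diagonal]
    congr 1; ext i
    simp [← RCLike.ofReal_mul, Real.mul_self_sqrt (hA.eigenvalues_nonneg i)]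
  conv_rhs => rw [hA.1.spectral_theorem, Unitary.conjStarAlgAut_apply]
  simp only [PosSemidef.sqrt, Matrix.mul_assoc]
  rw [← Matrix.mul_assoc _ hA.1.eigenvectorUnitary.1, Unitary.coe_star_mul_self, Matrix.one_mul,
    ← Matrix.mul_assoc _ _ (star _), hd]

theorem PosSemidef.posSemidef_sqrt {A : Matrix m m 𝕜} (hA : A.PosSemidef) :
    hA.sqrt.PosSemidef := by
  rw [PosSemidef.sqrt, star_eq_conjTranspose]
  exact (PosSemidef.diagonal fun i => by simp [Real.sqrt_nonneg]).mul_mul_conjTranspose_same _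

theorem PosSemidef.eq_conjTranspose_sqrt_mul_sqrt {A : Matrix m m 𝕜} (hA : A.PosSemidef) :
    A = hA.sqrtᴴ * hA.sqrt := by
  rw [hA.posSemidef_sqrt.1, hA.sqrt_mul_self]

theorem posSemidef_blockDiagonal [Fintype ι] [DecidableEq ι] {M : ι → Matrix m m 𝕜}
    (hM : ∀ i, (M i).PosSemidef) : (blockDiagonal M).PosSemidef := by
  have : blockDiagonal M =
      (blockDiagonal fun i => (hM i).sqrt)ᴴ * blockDiagonal fun i => (hM i).sqrt := by
    rw [blockDiagonal_conjTranspose, ← blockDiagonal_mul]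
    exact congrArg _ (funext fun i => (hM i).eq_conjTranspose_sqrt_mul_sqrt)
  exact this ▸ posSemidef_conjTranspose_mul_self _

theorem posSemidef_of_blocks_sub_smul_one [Fintype ι] [DecidableEq ι] {Q : ι → Matrix m m 𝕜}
    {r : 𝕜} (hQ : ∀ i, (Q i - r • 1).PosSemidef) :
    ((of fun p q : ι × m => if p.1 = q.1 then Q p.1 p.2 q.2 else 0) - r • 1).PosSemidef := by
  have : (of fun p q : ι × m => if p.1 = q.1 then Q p.1 p.2 q.2 else 0) - r • 1 =
      (blockDiagonal fun i => Q i - r • 1).submatrix Prod.swap Prod.swap := by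
    ext ⟨i, a⟩ ⟨j, b⟩
    by_cases hij : i = j <;> simp [blockDiagonal_apply, one_apply, hij]
  exact this ▸ (posSemidef_blockDiagonal hQ).submatrix _

theorem posSemidef_single_one_kronecker_one {V : Type*} [Fintype V] [DecidableEq V] (v : V) :
    (single v v (1 : 𝕜) ⊗ₖ (1 : Matrix m m 𝕜)).PosSemidef := by
  rw [← diagonal_single]
  exact (PosSemidef.diagonal (Pi.single_nonneg.mpr zero_le_one)).kronecker .one

theorem sub_kronecker {l n o p α : Type*} [NonUnitalNonAssocRing α] (A₁ A₂ : Matrix l n α)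
    (B : Matrix o p α) : (A₁ - A₂) ⊗ₖ B = A₁ ⊗ₖ B - A₂ ⊗ₖ B :=
  ext fun _ _ => sub_mul _ _ _

theorem spectralRadius_le_of_posSemidef {M : Matrix m m ℝ} {c : ℝ} (hM : M.PosSemidef)
    (hcM : (c • 1 - M).PosSemidef) : spectralRadius ℝ M ≤ ENNReal.ofReal c := by
  refine iSup₂_le fun k hk => ?_
  have hk0 : 0 ≤ k := (posSemidef_iff_isHermitian_and_spectrum_nonneg.mp hM).2 hk
  have hck : 0 ≤ c - k := by
    refine (posSemidef_iff_isHermitian_and_spectrum_nonneg.mp hcM).2 ?_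
    rw [← Algebra.algebraMap_eq_smul_one, ← spectrum.singleton_sub_eq]
    exact Set.sub_mem_sub rfl hk
  rw [← ENNReal.ofReal_coe_nnreal, coe_nnnorm, Real.norm_of_nonneg hk0]
  exact ENNReal.ofReal_le_ofReal (by linarith)

theorem PosSemidef.spectralRadius_sqrt_inv_mul_mul_sqrt_inv_le {D N : Matrix m m ℝ} {c : ℝ}
    (hD : D.PosSemidef) (hDunit : IsUnit D) (hN : N.PosSemidef) (hcDN : (c • D - N).PosSemidef) :
    spectralRadius ℝ (hD.sqrt⁻¹ * N * hD.sqrt⁻¹) ≤ ENNReal.ofReal c := by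
  set T := hD.sqrt⁻¹
  have hT : Tᴴ = T := by rw [conjTranspose_nonsing_inv, hD.posSemidef_sqrt.1]
  have hsqrt : IsUnit hD.sqrt.det := by
    rw [← isUnit_iff_isUnit_det]
    exact isUnit_of_mul_isUnit_left (hD.sqrt_mul_self ▸ hDunit)
  have hTDT : T * D * T = 1 := by
    rw [← hD.sqrt_mul_self, Matrix.mul_assoc, Matrix.mul_assoc, mul_nonsing_inv _ hsqrt,
      Matrix.mul_one, nonsing_inv_mul _ hsqrt]
  refine spectralRadius_le_of_posSemidef
    (by simpa only [hT] using hN.mul_mul_conjTranspose_same T) ?_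
  have : c • 1 - T * N * T = T * (c • D - N) * Tᴴ := by
    rw [hT, Matrix.mul_sub, Matrix.sub_mul, mul_smul_comm, smul_mul_assoc, hTDT]
  exact this ▸ hcDN.mul_mul_conjTranspose_same T

end Matrix

namespace SimpleGraph

variable {V R : Type*} [Fintype V] [DecidableEq V] (G : SimpleGraph V) [DecidableRel G.Adj]
  [CommRing R] [PartialOrder R] [StarRing R] [StarOrderedRing R] [TrivialStar R]

theorem posSemidef_degMatrix_add_adjMatrix : (G.degMatrix R + G.adjMatrix R).PosSemidef := by
  have : G.degMatrix R + G.adjMatrix R = G.incMatrix R * (G.incMatrix R)ᴴ := by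
    rw [conjTranspose_eq_transpose_of_trivial, incMatrix_mul_transpose]
    ext a b
    by_cases hab : a = b
    · simp [hab, degMatrix]
    · simp [hab, degMatrix, adjMatrix_apply]
  exact this ▸ posSemidef_self_mul_conjTranspose _

theorem posSemidef_card_sub_one_smul_one_sub_degMatrix :
    (((Fintype.card V : ℝ) - 1) • 1 - G.degMatrix ℝ).PosSemidef := by
  rw [degMatrix, smul_one_eq_diagonal, diagonal_sub]
  refine PosSemidef.diagonal fun v => ?_
  have := G.degree_lt_card_verts v
  simp only [Pi.zero_apply, sub_nonneg]
  rw [le_sub_iff_add_le]; exact_mod_cast this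

end SimpleGraph

section Splitting

variable {V : Type*} [Fintype V] [DecidableEq V] (κ : Type*) [Fintype κ] [DecidableEq κ]
  (G : SimpleGraph V) [DecidableRel G.Adj] (l : V) (μ ε : ℝ)
  (H : Matrix (V × κ) (V × κ) ℝ)

noncomputable def splittingD : Matrix (V × κ) (V × κ) ℝ :=
  H + μ⁻¹ • (single l l 1 ⊗ₖ (1 : Matrix κ κ ℝ))
    + (2 / μ) • (G.degMatrix ℝ ⊗ₖ (1 : Matrix κ κ ℝ)) + ε • 1

/-- The paper's `(1/μ)(L_dia - L_off) ⊗ I_d`, where `L_off = -A`. -/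
noncomputable def splittingN : Matrix (V × κ) (V × κ) ℝ :=
  μ⁻¹ • ((G.degMatrix ℝ + G.adjMatrix ℝ) ⊗ₖ (1 : Matrix κ κ ℝ))

variable {κ G l μ ε H} {m : ℝ}

theorem posSemidef_splittingN (hμ : 0 ≤ μ) : (splittingN κ G μ).PosSemidef :=
  (G.posSemidef_degMatrix_add_adjMatrix.kronecker .one).smul (inv_nonneg.mpr hμ)

theorem isUnit_splittingD (hμ : 0 ≤ μ) (hH : (H - m • 1).PosSemidef) (hmε : 0 < m + ε) :
    IsUnit (splittingD κ G l μ ε H) := by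
  have hdeg : (G.degMatrix ℝ ⊗ₖ (1 : Matrix κ κ ℝ)).PosSemidef :=
    (PosSemidef.diagonal fun v => Nat.cast_nonneg _).kronecker .one
  have : splittingD κ G l μ ε H
      = (H - m • 1) + μ⁻¹ • (single l l 1 ⊗ₖ (1 : Matrix κ κ ℝ))
      + (2 / μ) • (G.degMatrix ℝ ⊗ₖ (1 : Matrix κ κ ℝ)) + (m + ε) • 1 := by
    rw [splittingD]; module
  rw [this]
  refine (PosDef.posSemidef_add ?_ (PosDef.one.smul hmε)).isUnit
  exact (hH.add ((posSemidef_single_one_kronecker_one l).smul (inv_nonneg.mpr hμ))).add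
    (hdeg.smul (div_nonneg zero_le_two hμ))

theorem posSemidef_smul_splittingD_sub_splittingN {c : ℝ} (hμ : 0 ≤ μ)
    (hH : (H - m • 1).PosSemidef) (hc0 : 0 ≤ c) (hc1 : c ≤ 1)
    (hc : c * (m + ε) = μ⁻¹ * ((1 - c) * (2 * ((Fintype.card V : ℝ) - 1)))) :
    (c • splittingD κ G l μ ε H - splittingN κ G μ).PosSemidef := by
  set I := (1 : Matrix κ κ ℝ)
  set P :=
    (2 * (1 - c)) • (((Fintype.card V : ℝ) - 1) • 1 - G.degMatrix ℝ) + G.lapMatrix ℝ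
  have hP : P.PosSemidef :=
    (G.posSemidef_card_sub_one_smul_one_sub_degMatrix.smul (by linarith)).add
      (G.posSemidef_lapMatrix ℝ)
  have : c • splittingD κ G l μ ε H - splittingN κ G μ =
      c • (H - m • 1 + μ⁻¹ • (single l l 1 ⊗ₖ I)) + μ⁻¹ • (P ⊗ₖ I) := by
    rw [splittingD, splittingN, ← one_kronecker_one]
    simp only [P, SimpleGraph.lapMatrix, add_kronecker, sub_kronecker, smul_kronecker]
    linear_combination (norm := module) hc • ((1 : Matrix V V ℝ) ⊗ₖ I)
  rw [this]
  have hR := hH.add ((posSemidef_single_one_kronecker_one l).smul (inv_nonneg.mpr hμ))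
  exact (hR.smul hc0).add ((hP.kronecker .one).smul (inv_nonneg.mpr hμ))

end Splitting

theorem spectral_radius_splitting_lt_one_general
    (n d : ℕ) (G : SimpleGraph (Fin n)) [DecidableRel G.Adj]
    (l : Fin n)
    (μ ε mf : ℝ) (hμ : 0 < μ) (hε : 0 < ε) (hmf : 0 < mf)
    (Q : Fin n → Matrix (Fin d) (Fin d) ℝ)
    (hQlow : ∀ i, (Q i - mf • (1 : Matrix (Fin d) (Fin d) ℝ)).PosSemidef)
    (HessF : Matrix (Fin n × Fin d) (Fin n × Fin d) ℝ)
    (hHessF : HessF = Matrix.of fun p q => if p.1 = q.1 then Q p.1 p.2 q.2 else 0)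
    (Ldia : Matrix (Fin n) (Fin n) ℝ)
    (hLdia : Ldia = Matrix.diagonal (fun i => (G.degree i : ℝ)))
    (Loff : Matrix (Fin n) (Fin n) ℝ) (hLoff : Loff = G.lapMatrix ℝ - Ldia)
    (D N : Matrix (Fin n × Fin d) (Fin n × Fin d) ℝ)
    (hDdef : D = HessF
      + μ⁻¹ • (Matrix.single l l 1 ⊗ₖ (1 : Matrix (Fin d) (Fin d) ℝ))
      + (2 / μ) • (Ldia ⊗ₖ (1 : Matrix (Fin d) (Fin d) ℝ))
      + ε • (1 : Matrix (Fin n × Fin d) (Fin n × Fin d) ℝ))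
    (hNdef : N = μ⁻¹ • ((Ldia - Loff) ⊗ₖ (1 : Matrix (Fin d) (Fin d) ℝ)))
    (hD : D.PosSemidef) :
    spectralRadius ℝ ((Matrix.PosSemidef.sqrt hD)⁻¹ * N * (Matrix.PosSemidef.sqrt hD)⁻¹) ≤
      ENNReal.ofReal (2 * ((n : ℝ) - 1) / (μ * (mf + ε) + 2 * ((n : ℝ) - 1))) ∧
    2 * ((n : ℝ) - 1) / (μ * (mf + ε) + 2 * ((n : ℝ) - 1)) < 1 := by
  have hdeg : Ldia = G.degMatrix ℝ := hLdia
  have hD' : D = splittingD (Fin d) G l μ ε HessF := by rw [hDdef, hdeg, splittingD]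
  have hN' : N = splittingN (Fin d) G μ := by
    rw [hNdef, hLoff, hdeg, SimpleGraph.lapMatrix, splittingN, sub_sub_cancel_left, sub_neg_eq_add]
  have hH : (HessF - mf • 1).PosSemidef := hHessF ▸ posSemidef_of_blocks_sub_smul_one hQlow
  set c := 2 * ((n : ℝ) - 1) / (μ * (mf + ε) + 2 * ((n : ℝ) - 1))
  have hn : (1 : ℝ) ≤ n := by exact_mod_cast l.pos
  have hc0 : 0 ≤ c := by positivity
  have hc1 : c < 1 := (div_lt_one (by positivity)).mpr (by linarith [mul_pos hμ (add_pos hmf hε)])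
  have hcS : c * (mf + ε) = μ⁻¹ * ((1 - c) * (2 * ((Fintype.card (Fin n) : ℝ) - 1))) := by
    have : c * (μ * (mf + ε) + 2 * ((n : ℝ) - 1)) = 2 * ((n : ℝ) - 1) :=
      div_mul_cancel₀ _ (by positivity)
    rw [Fintype.card_fin]
    field_simp
    linarith
  subst hD' hN'
  refine ⟨hD.spectralRadius_sqrt_inv_mul_mul_sqrt_inv_le ?_ (posSemidef_splittingN hμ.le)
    (posSemidef_smul_splittingD_sub_splittingN hμ.le hH hc0 hc1.le hcS), hc1⟩
  exact isUnit_splittingD hμ.le hH (by positivity)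

/-- Lemma 1: with D_t = ∇²F + (1/μ)(e^l(e^l)ᵀ ⊗ I_d) + (2/μ)(L_dia ⊗ I_d) + εI and
N = (1/μ)(L_dia − L_off) ⊗ I_d, the spectral radius of D_t^{-1/2} N D_t^{-1/2} is at most
2(n−1)/(μ(m_f+ε)+2(n−1)) < 1. -/
theorem spectral_radius_splitting_lt_one
    (n d : ℕ) (hn : 2 ≤ n) (G : SimpleGraph (Fin n)) [DecidableRel G.Adj]
    (hG : G.Connected) (l : Fin n)
    (μ ε mf Mf : ℝ) (hμ : 0 < μ) (hε : 0 < ε) (hmf : 0 < mf) (hmM : mf ≤ Mf)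
    (Q : Fin n → Matrix (Fin d) (Fin d) ℝ)
    (hQsym : ∀ i, (Q i).IsHermitian)
    (hQlow : ∀ i, (Q i - mf • (1 : Matrix (Fin d) (Fin d) ℝ)).PosSemidef)
    (hQhigh : ∀ i, (Mf • (1 : Matrix (Fin d) (Fin d) ℝ) - Q i).PosSemidef)
    (HessF : Matrix (Fin n × Fin d) (Fin n × Fin d) ℝ)
    (hHessF : HessF = Matrix.of fun p q => if p.1 = q.1 then Q p.1 p.2 q.2 else 0)
    (Ldia : Matrix (Fin n) (Fin n) ℝ)
    (hLdia : Ldia = Matrix.diagonal (fun i => (G.degree i : ℝ)))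
    (Loff : Matrix (Fin n) (Fin n) ℝ) (hLoff : Loff = G.lapMatrix ℝ - Ldia)
    (D N : Matrix (Fin n × Fin d) (Fin n × Fin d) ℝ)
    (hDdef : D = HessF
      + μ⁻¹ • (Matrix.single l l 1 ⊗ₖ (1 : Matrix (Fin d) (Fin d) ℝ))
      + (2 / μ) • (Ldia ⊗ₖ (1 : Matrix (Fin d) (Fin d) ℝ))
      + ε • (1 : Matrix (Fin n × Fin d) (Fin n × Fin d) ℝ))
    (hNdef : N = μ⁻¹ • ((Ldia - Loff) ⊗ₖ (1 : Matrix (Fin d) (Fin d) ℝ)))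
    (hD : D.PosSemidef) :
    spectralRadius ℝ ((Matrix.PosSemidef.sqrt hD)⁻¹ * N * (Matrix.PosSemidef.sqrt hD)⁻¹) ≤
      ENNReal.ofReal (2 * ((n : ℝ) - 1) / (μ * (mf + ε) + 2 * ((n : ℝ) - 1))) ∧
    2 * ((n : ℝ) - 1) / (μ * (mf + ε) + 2 * ((n : ℝ) - 1)) < 1 :=
  spectral_radius_splitting_lt_one_general n d G l μ ε mf hμ hε hmf Q hQlow HessF hHessF Ldia hLdia
    Loff hLoff D N hDdef hNdef hD
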